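/- arXiv:2409.00666 — 8 statements merged into one kernel-verified Lean document; each statement's English description precedes it below -/
import Mathlib

section
/- In any preference model, if (φ ∧ ψ) ⤳ χ holds then φ ⤳ (ψ → χ) holds. (Validity of axiom SH.) -/
/-- ⪰-maximal elements of X: u ∈ X such that any v ∈ X with v ⪰ u satisfies u ⪰ v. -/
def most {S : Type*} (r : S → S → Prop) (X : Set S) : Set S :=
  {u ∈ X | ∀ v ∈ X, r v u → r u v}

/-- Support: φ ⤳ ψ holds iff most(||φ||) ⊆ ||ψ||. -/
def supp {S : Type*} (r : S → S → Prop) (X Y : Set S) : Prop :=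
  most r X ⊆ Y

/-- Limitedness: nonempty truth sets have ⪰-maximal elements. -/
def limited {S : Type*} (r : S → S → Prop) : Prop :=
  ∀ X : Set S, X.Nonempty → (most r X).Nonempty

theorem most_inter_subset {S : Type*} (r : S → S → Prop) (X Y : Set S) :
    most r X ∩ Y ⊆ most r (X ∩ Y) :=
  fun _ ⟨hu, hy⟩ => ⟨⟨hu.1, hy⟩, fun v hv => hu.2 v hv.1⟩

/-- validity of SH. -/
theorem stmt2 {S : Type*} (r : S → S → Prop) (A B C : Set S)
    (h : supp r (A ∩ B) C) : supp r A (Bᶜ ∪ C) := by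
  intro u hu
  by_cases hb : u ∈ B
  · exact Or.inr (h (most_inter_subset r A B ⟨hu, hb⟩))
  · exact Or.inl hb
end

section
/- In any preference model satisfying the limitedness condition, if ¬(φ ↔ ψ) ⤳ ⊥ holds then for every χ, φ ⤳ χ holds iff ψ ⤳ χ holds. (Validity of axiom LL+.) -/
/-! Under limitedness, `X ⤳ ⊥` forces `X = ∅`; applied to the symmetric difference of `A` and `B`
this gives `A = B`, after which both sides of the equivalence are literally the same. -/

theorem limited.eq_empty_of_supp_empty {S : Type*} {r : S → S → Prop} (hlim : limited r)
    {X : Set S} (h : supp r X ∅) : X = ∅ :=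
  Set.not_nonempty_iff_eq_empty.mp fun hX => (hlim X hX).ne_empty (Set.subset_empty_iff.mp h)

/-- validity of LL+. -/
theorem stmt3 {S : Type*} (r : S → S → Prop) (hlim : limited r) (A B : Set S)
    (h : supp r ((A \ B) ∪ (B \ A)) (∅ : Set S)) :
    ∀ C : Set S, supp r A C ↔ supp r B C := by
  have hAB : A = B := symmDiff_eq_bot.mp (hlim.eq_empty_of_supp_empty h)
  intro C
  rw [hAB]
end

section
/- In any preference model, if φ ⤳ ψ and (φ ∧ ψ) ⤳ χ both hold, then φ ⤳ χ holds. (Validity of CUT.) -/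
theorem most_inter_subset_most {S : Type*} (r : S → S → Prop) {X Y : Set S} (hYX : Y ⊆ X) :
    most r X ∩ Y ⊆ most r Y :=
  fun _ ⟨hu, huY⟩ => ⟨huY, fun v hv => hu.2 v (hYX hv)⟩

theorem most_subset_most_inter {S : Type*} (r : S → S → Prop) {X Y : Set S} (h : supp r X Y) :
    most r X ⊆ most r (X ∩ Y) :=
  fun _ hu => most_inter_subset_most r Set.inter_subset_left ⟨hu, hu.1, h hu⟩

/-- validity of CUT. -/
theorem stmt6 {S : Type*} (r : S → S → Prop) (A B C : Set S)
    (h1 : supp r A B) (h2 : supp r (A ∩ B) C) : supp r A C :=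
  (most_subset_most_inter r h1).trans h2
end

section
/- Cautious monotonicity fails for the support operator: there exists a preference model satisfying the limitedness condition and formulas φ, ψ, χ such that φ ⤳ ψ and φ ⤳ χ hold but (φ ∧ ψ) ⤳ χ fails. -/
/-!
Take three states `s ⪰ w ⪰ v` with a preference that is *not* transitive: `s ⪰ v` fails.
Among all states only `s` is maximal, so `d ⤳ r` and `d ⤳ ¬g` hold with `‖d‖` everything,
`‖r‖ = {s, v}` and `‖g‖ = {v}`. Once `w` is discarded, however, nothing in `{s, v}` is strictly
preferred to `v`, so `v` is maximal in `‖d ∧ r‖` while `g` holds there.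
-/

theorem limited_of_wellFounded {S : Type*} {r s : S → S → Prop} (hs : WellFounded s)
    (hrs : ∀ u v, r v u → ¬ r u v → s v u) : limited r := by
  intro X hX
  obtain ⟨u, huX, hu⟩ := hs.has_min X hX
  exact ⟨u, huX, fun v hv hvu => not_not.mp fun huv => hu v hv (hrs u v hvu huv)⟩

theorem supp_iff {S : Type*} (r : S → S → Prop) (X Y : Set S) :
    supp r X Y ↔ ∀ u ∈ X, (∀ v ∈ X, r v u → r u v) → u ∈ Y := by
  simp only [supp, most, Set.subset_def, Set.mem_ofPred_eq, and_imp]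

inductive State
  | s | w | v
  deriving DecidableEq

namespace State

instance : Fintype State := ⟨{s, w, v}, fun x => by cases x <;> simp⟩

/-- `Pref a b` is `a ⪰ b`. -/
def Pref : State → State → Prop
  | a, b => a = b ∨ (a = s ∧ b = w) ∨ (a = w ∧ b = v)

instance : DecidableRel Pref := fun a b => by unfold Pref; infer_instance

def rank : State → ℕ
  | s => 0
  | w => 1
  | v => 2

theorem limited_pref : limited Pref :=
  limited_of_wellFounded (InvImage.wf rank wellFounded_lt)
    (by decide : ∀ a b, Pref b a → ¬ Pref a b → rank b < rank a)

end State

open State in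
/-- cautious monotonicity fails. -/
theorem stmt8 : ∃ (S : Type) (r : S → S → Prop), limited r ∧
    ∃ A B C : Set S, supp r A B ∧ supp r A C ∧ ¬ supp r (A ∩ B) C := by
  refine ⟨State, Pref, limited_pref, Set.univ, {s, v}, {v}ᶜ, ?_⟩
  simp only [supp_iff, Set.mem_univ, Set.mem_inter_iff, Set.mem_insert_iff,
    Set.mem_singleton_iff, Set.mem_compl_iff, true_and, forall_const]
  decide
end

section
/- In any preference model satisfying the limitedness condition, the lottery-paradox pattern is blocked: if for each i in a finite nonempty index set, ⊤ ⤳ ¬Tᵢ holds, and the truth sets of the Tᵢ cover S (i.e., ||⋀ᵢ ¬Tᵢ|| = ∅), and S is nonempty, then a contradiction follows; hence not all of the statements ⊤ ⤳ ¬Tᵢ can simultaneously hold in a nonempty model where some ticket always wins. -/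
/-! Support is closed under arbitrary conjunction of conclusions, and under limitedness a
nonempty premise supports only satisfiable conclusions; so `⊤ ⤳ ¬Tᵢ` for all `i` forces some
state outside every `Tᵢ`. -/

theorem supp_iInter {S ι : Type*} {r : S → S → Prop} {X : Set S} {Y : ι → Set S}
    (h : ∀ i, supp r X (Y i)) : supp r X (⋂ i, Y i) :=
  Set.subset_iInter h

theorem limited.nonempty_of_supp {S : Type*} {r : S → S → Prop} (hlim : limited r)
    {X Y : Set S} (hX : X.Nonempty) (h : supp r X Y) : Y.Nonempty :=
  (hlim X hX).mono h

theorem stmt10_general {S : Type*} (r : S → S → Prop) [Nonempty S] (hlim : limited r)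
    {ι : Type*} (T : ι → Set S)
    (hsupp : ∀ i, supp r (Set.univ : Set S) (T i)ᶜ)
    (hcover : (⋂ i, (T i)ᶜ) = (∅ : Set S)) :
    False := by
  have hne : (⋂ i, (T i)ᶜ).Nonempty :=
    hlim.nonempty_of_supp Set.univ_nonempty (supp_iInter hsupp)
  exact hne.ne_empty hcover

/-- the lottery paradox is blocked. -/
theorem stmt10 {S : Type*} (r : S → S → Prop) [Nonempty S] (hlim : limited r)
    {ι : Type*} [Fintype ι] [Nonempty ι] (T : ι → Set S)
    (hsupp : ∀ i, supp r (Set.univ : Set S) (T i)ᶜ)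
    (hcover : (⋂ i, (T i)ᶜ) = (∅ : Set S)) :
    False :=
  stmt10_general r hlim T hsupp hcover
end

section
/- In any preference model with limitedness, the translated Nec axiom holds: if ¬φ ⤳ ⊥ holds then ψ ⤳ φ holds for every formula ψ. -/
theorem supp_univ {S : Type*} (r : S → S → Prop) (X : Set S) : supp r X Set.univ :=
  Set.subset_univ _

/-- translated Nec axiom. -/
theorem stmt13 {S : Type*} (r : S → S → Prop) (hlim : limited r) (A : Set S)
    (h : supp r Aᶜ (∅ : Set S)) : ∀ B : Set S, supp r B A := by
  have hA : A = Set.univ := Set.compl_empty_iff.mp (hlim.eq_empty_of_supp_empty h)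
  intro B
  rw [hA]
  exact supp_univ r B
end

section
/- In any Trust model, the semantic counterpart of rule S5_F is sound: support formulas have uniform truth value within each partition class, i.e., if states s and w belong to the same partition class Sᵢ, then for all propositional φ, ψ: (φ ⤳ ψ holds at s) iff (φ ⤳ ψ holds at w); consequently, if a Boolean combination of support formulas implies χ at every state of the model, then at every state where that combination holds, ¬χ ⤳ ⊥ also holds. -/
def cls {S I : Type*} (part : S → I) (s : S) : Set S := {u | part u = part s}

/-- The support formula `φ ⤳ ψ` at `s`, with truth sets restricted to the class of `s`. -/
def suppAt {S I : Type*} (part : S → I) (pref : I → S → S → Prop)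
    (s : S) (X Y : Set S) : Prop :=
  most (pref (part s)) (X ∩ cls part s) ⊆ Y ∩ cls part s

theorem cls_eq_of_part_eq {S I : Type*} {part : S → I} {s w : S} (h : part s = part w) :
    cls part s = cls part w := by
  ext u
  simp only [cls, Set.mem_ofPred_eq, h]

theorem suppAt_iff_of_part_eq {S I : Type*} {part : S → I} (pref : I → S → S → Prop)
    {s w : S} (h : part s = part w) (X Y : Set S) :
    suppAt part pref s X Y ↔ suppAt part pref w X Y := by
  rw [suppAt, suppAt, h, cls_eq_of_part_eq h]

theorem suppAt_of_inter_cls_eq_empty {S I : Type*} {part : S → I}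
    (pref : I → S → S → Prop) {s : S} {X : Set S} (h : X ∩ cls part s = ∅) (Y : Set S) :
    suppAt part pref s X Y := by
  simp only [suppAt, h]
  exact (Set.sep_subset _ _).trans (Set.empty_subset _)

theorem compl_inter_cls_eq_empty {S I : Type*} {part : S → I} {P : S → Prop}
    (hP : ∀ s w : S, part s = part w → (P s ↔ P w)) {χ : Set S} (hχ : ∀ s : S, P s → s ∈ χ)
    {s : S} (hs : P s) : χᶜ ∩ cls part s = ∅ :=
  Set.eq_empty_of_forall_notMem fun u ⟨huχ, hu⟩ => huχ (hχ u ((hP u s hu).mpr hs))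

theorem stmt15_general {S I : Type*} (part : S → I) (pref : I → S → S → Prop) :
    (∀ (s w : S) (X Y : Set S), part s = part w →
        (suppAt part pref s X Y ↔ suppAt part pref w X Y)) ∧
    (∀ P : S → Prop, (∀ s w : S, part s = part w → (P s ↔ P w)) →
        ∀ χ : Set S, (∀ s : S, P s → s ∈ χ) →
          ∀ s : S, P s → suppAt part pref s χᶜ (∅ : Set S)) :=
  ⟨fun _ _ X Y h => suppAt_iff_of_part_eq pref h X Y,
    fun _ hP _ hχ _ hs => suppAt_of_inter_cls_eq_empty pref (compl_inter_cls_eq_empty hP hχ hs) _⟩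

/-- soundness of the semantic counterpart of S5_F in Trust models. -/
theorem stmt15 {S I : Type*} (part : S → I) (pref : I → S → S → Prop)
    (R : S → S → Prop) (hser : ∀ s : S, ∃ t, R s t) (htrans : Transitive R)
    (hlim : ∀ (i : I) (X : Set S),
      (X ∩ {u | part u = i}).Nonempty →
      (most (pref i) (X ∩ {u | part u = i})).Nonempty) :
    (∀ (s w : S) (X Y : Set S), part s = part w →
        (suppAt part pref s X Y ↔ suppAt part pref w X Y)) ∧
    (∀ P : S → Prop, (∀ s w : S, part s = part w → (P s ↔ P w)) →
        ∀ χ : Set S, (∀ s : S, P s → s ∈ χ) →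
          ∀ s : S, P s → suppAt part pref s χᶜ (∅ : Set S)) :=
  stmt15_general part pref
end

section
/- In the paper's concrete three-state Trust model, at state v the agent trusts ¬g and r on the basis of d but does not trust ¬g on the basis of d ∧ r: v ⊨ T_d(¬g), v ⊨ T_d(r), and v ⊨ ¬T_{d∧r}(¬g), where T_φ ψ := B(φ) ∧ B(φ ⤳ ψ). -/
/-- States of the concrete model: 0 = v, 1 = w, 2 = s. -/
abbrev St := Fin 3

/-- Preference relation: s ⪰ w and w ⪰ v. -/
def pref : St → St → Prop := fun a b => (a = 2 ∧ b = 1) ∨ (a = 1 ∧ b = 0)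

/-- Accessibility relation: v R s, w R w, s R s. -/
def AccR : St → St → Prop := fun a b => (a = 0 ∧ b = 2) ∨ (a = 1 ∧ b = 1) ∨ (a = 2 ∧ b = 2)

def dSet : Set St := Set.univ
def rSet : Set St := {0, 2}
def gSet : Set St := {0}

/-- B(·) at a state: truth at all R-successors. -/
def holdsB (s : St) (P : St → Prop) : Prop := ∀ t : St, AccR s t → P t

/-- Trust: T_X Y := B(X) ∧ B(X ⤳ Y) (support formulas are state-independent
in the single partition class). -/
def Trusts (s : St) (X Y : Set St) : Prop :=
  holdsB s (· ∈ X) ∧ holdsB s (fun _ => supp pref X Y)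

/-! The only R-successor of v is s, so trusting ψ on the basis of φ at v amounts to s ⊨ φ
together with the support φ ⤳ ψ. Among all states s is the unique ⪰-maximal one, and
s ⊨ ¬g ∧ r. But ⪰ does not relate the two d ∧ r states v and s, so v is itself most
preferred among them, and v ⊨ g. -/

theorem most_eq_self_of_forall_not_rel {S : Type*} {r : S → S → Prop} {X : Set S}
    (h : ∀ u ∈ X, ∀ v ∈ X, ¬ r v u) : most r X = X :=
  Set.sep_eq_self_iff_mem_true.mpr fun u hu v hv hvu => (h u hu v hv hvu).elim

theorem holdsB_zero_iff {P : St → Prop} : holdsB 0 P ↔ P 2 := by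
  simp [holdsB, AccR]

theorem trusts_zero_iff {X Y : Set St} : Trusts 0 X Y ↔ 2 ∈ X ∧ supp pref X Y := by
  simp only [Trusts, holdsB_zero_iff]

theorem most_pref_dSet : most pref dSet = {2} := by
  ext u
  fin_cases u <;> simp [most, pref, dSet]

theorem most_pref_dSet_inter_rSet : most pref (dSet ∩ rSet) = rSet := by
  rw [dSet, Set.univ_inter]
  refine most_eq_self_of_forall_not_rel ?_
  simp [rSet, pref]

/-- in the concrete three-state model, at v the agent trusts ¬g
and r on the basis of d, but not ¬g on the basis of d ∧ r. -/
theorem stmt18 :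
    Trusts 0 dSet gSetᶜ ∧ Trusts 0 dSet rSet ∧ ¬ Trusts 0 (dSet ∩ rSet) gSetᶜ := by
  simp only [trusts_zero_iff, supp, most_pref_dSet, most_pref_dSet_inter_rSet,
    Set.singleton_subset_iff]
  refine ⟨⟨trivial, by simp [gSet]⟩, ⟨trivial, by simp [rSet]⟩, fun ⟨_, h⟩ => ?_⟩
  exact h (show (0 : St) ∈ rSet by simp [rSet]) rfl
end
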